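/- Let m ≥ 4 be even and Ψ an m-order n-dimensional real symmetric tensor such that Ψ_{i₁⋯i_m} is nonzero only if half of the indices equal some j and the other half equal some k, and such that for all j, k, |Ψ_{j⋯j}| ≥ C(m−1, m/2) |Ψ_{j⋯jk⋯k}| (diagonal dominance). Then Q(Ψ) = Z(Ψ) = max_j |Ψ_{j⋯j}|. -/

import Mathlib

open Finset

noncomputable section

/-- Contraction `T z^m` of an `(m+1)`-order tensor with entries in `ℂ`. -/
def tapplyC {m : ℕ} {ι : Type} [Fintype ι] (T : (Fin (m + 1) → ι) → ℂ)
    (z : ι → ℂ) : ι → ℂ :=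
  fun i => ∑ f : Fin m → ι, T (Fin.cons i f) * ∏ j, z (f j)

/-- Contraction `T x^m` of an `(m+1)`-order tensor with entries in `ℝ`. -/
def tapplyR {m : ℕ} {ι : Type} [Fintype ι] (T : (Fin (m + 1) → ι) → ℝ)
    (x : ι → ℝ) : ι → ℝ :=
  fun i => ∑ f : Fin m → ι, T (Fin.cons i f) * ∏ j, x (f j)

/-- A tensor is symmetric if its entries are invariant under index permutations. -/
def SymmT {m : ℕ} {ι R : Type} (T : (Fin m → ι) → R) : Prop :=
  ∀ (σ : Equiv.Perm (Fin m)) (f : Fin m → ι), T (f ∘ σ) = T f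

/-- `lam` is a Q-eigenvalue of the complex tensor `T` with Q-eigenvector `z`:
`T z^{m} = lam * conj z` and `z̄ᵀ z = 1`. -/
def IsQEig {m : ℕ} {ι : Type} [Fintype ι] (T : (Fin (m + 1) → ι) → ℂ)
    (lam : ℝ) (z : ι → ℂ) : Prop :=
  tapplyC T z = (fun i => (lam : ℂ) * (starRingEnd ℂ) (z i)) ∧
    ∑ i, (starRingEnd ℂ) (z i) * z i = 1

/-- `lam` is a Z-eigenvalue of the real tensor `T` with Z-eigenvector `x`. -/
def IsZEig {m : ℕ} {ι : Type} [Fintype ι] (T : (Fin (m + 1) → ι) → ℝ)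
    (lam : ℝ) (x : ι → ℝ) : Prop :=
  tapplyR T x = (fun i => lam * x i) ∧ ∑ i, x i ^ 2 = 1

/-- Complexification of a real tensor. -/
def toC {m : ℕ} {ι : Type} (T : (Fin (m + 1) → ι) → ℝ) :
    (Fin (m + 1) → ι) → ℂ := fun f => ((T f : ℝ) : ℂ)

/-- The entanglement eigenvalue of a real tensor: largest Q-eigenvalue. -/
def QmaxR {m : ℕ} {ι : Type} [Fintype ι] (T : (Fin (m + 1) → ι) → ℝ) : ℝ :=
  sSup {lam : ℝ | ∃ z : ι → ℂ, IsQEig (toC T) lam z}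

/-- The Z-spectral radius of a real tensor: largest `|λ|` over Z-eigenvalues. -/
def Zrad {m : ℕ} {ι : Type} [Fintype ι] (T : (Fin (m + 1) → ι) → ℝ) : ℝ :=
  sSup {r : ℝ | ∃ (lam : ℝ) (x : ι → ℝ), IsZEig T lam x ∧ r = |lam|}

/-- Frobenius norm of a real tensor. -/
def fnorm {m : ℕ} {ι : Type} [Fintype ι] (T : (Fin m → ι) → ℝ) : ℝ :=
  Real.sqrt (∑ f : Fin m → ι, T f ^ 2)

/-!
Write the order as `m + 1 = 2h`. For a Q-eigenpair `(λ, z)`, contracting the eigen-equation with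
`z` gives `λ = ∑_f Ψ_f ∏_t z_{f t}`, so `|λ| ≤ ∑_f |Ψ_f| ∏_t w_{f t}` with `w = |z|`. Only
constant and half-half index tuples contribute. A half-half tuple with values `j ≠ k` and first
index `j` is fixed by the `h - 1` further positions holding `j`, so there are
`C(m, h - 1) = C(m, h)` of them, and diagonal dominance bounds their total contribution by
`A w_j^h w_k^h`, where `A = max_j |Ψ_{j⋯j}|`. Summing, `|λ| ≤ A (∑_j w_j^h)^2 ≤ A`, because
`h ≥ 2` and `∑_j w_j^2 = 1`. Real Z-eigenpairs are Q-eigenpairs, so the same bound holds for `Z`.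

Conversely, the index tuple `(i, j, …, j)` with `i ≠ j` is neither constant nor half-half, so
`Ψ e_j^m = Ψ_{j⋯j} e_j`: the unit vector `e_j` is a Z-eigenvector for `Ψ_{j⋯j}`, and `c e_j` with
`Ψ_{j⋯j} c^{m+1} = |Ψ_{j⋯j}|`, `|c| = 1` is a Q-eigenvector for `|Ψ_{j⋯j}|`.
-/

theorem Finset.sum_le_sum_comp_of_ne_zero_mem_image {α β N : Type*} [Fintype α] [DecidableEq α]
    [AddCommMonoid N] [Preorder N] [AddLeftMono N] {f : α → N} (hf : ∀ a, 0 ≤ f a)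
    {s : Finset β} {φ : β → α} (hφ : ∀ a, f a ≠ 0 → a ∈ s.image φ) :
    ∑ a, f a ≤ ∑ b ∈ s, f (φ b) :=
  calc ∑ a, f a = ∑ a ∈ s.image φ, f a :=
        (sum_subset (subset_univ _) fun a _ ha => not_not.1 (mt (hφ a) ha)).symm
    _ ≤ ∑ b ∈ s, f (φ b) := sum_image_le_of_nonneg fun _ _ => hf _

theorem Finset.sq_sum_eq_sum_mul_self_add_sum_offDiag {α R : Type*} [DecidableEq α]
    [CommSemiring R] (s : Finset α) (x : α → R) :
    (∑ i ∈ s, x i) ^ 2 = ∑ i ∈ s, x i * x i + ∑ p ∈ s.offDiag, x p.1 * x p.2 := by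
  rw [sq, sum_mul_sum, ← sum_product', ← diag_union_offDiag,
    sum_union (disjoint_diag_offDiag _), sum_diag]

section IndexCombinatorics

variable {ι : Type*}

def IsHalfHalf [DecidableEq ι] {M : ℕ} (h : ℕ) (f : Fin M → ι) (j k : ι) : Prop :=
  j ≠ k ∧ #{t | f t = j} = h ∧ ∀ t, f t = j ∨ f t = k

theorem IsHalfHalf.symm [DecidableEq ι] {M h : ℕ} {f : Fin M → ι} {j k : ι} (hM : M = h + h)
    (hf : IsHalfHalf h f j k) : IsHalfHalf h f k j := by
  obtain ⟨hjk, hcard, hval⟩ := hf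
  refine ⟨hjk.symm, ?_, fun t => (hval t).symm⟩
  have hk : univ.filter (fun t => f t = k) = univ.filter (fun t => ¬f t = j) :=
    filter_congr fun t _ => ⟨fun hk hj => hjk (hj.symm.trans hk),
      (hval t).resolve_left⟩
  have := card_filter_add_card_filter_not (s := univ) (fun t => f t = j)
  rw [card_univ, Fintype.card_fin] at this
  rw [hk]
  omega

def twoValuedIndex {m : ℕ} (j k : ι) (T : Finset (Fin m)) : Fin (m + 1) → ι :=
  Fin.cons j fun s => if s ∈ T then j else k

variable {m : ℕ} {j k : ι} {T : Finset (Fin m)}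

theorem twoValuedIndex_eq_or_eq (t : Fin (m + 1)) :
    twoValuedIndex j k T t = j ∨ twoValuedIndex j k T t = k := by
  refine Fin.cases (by simp [twoValuedIndex]) (fun s => ?_) t
  by_cases hs : s ∈ T <;> simp [twoValuedIndex, hs]

theorem prod_twoValuedIndex {M : Type*} [CommMonoid M] (w : ι → M) :
    ∏ t, w (twoValuedIndex j k T t) = w j ^ (#T + 1) * w k ^ (m - #T) := by
  simp [twoValuedIndex, Fin.prod_univ_succ, apply_ite w, prod_ite, filter_not, card_sdiff,
    pow_succ', mul_assoc]

theorem card_twoValuedIndex [DecidableEq ι] (hjk : j ≠ k) :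
    #{t | twoValuedIndex j k T t = j} = #T + 1 := by
  rw [Fin.card_filter_univ_succ]
  simp [twoValuedIndex, hjk.symm]

theorem IsHalfHalf.eq_twoValuedIndex [DecidableEq ι] {h : ℕ} {f : Fin (m + 1) → ι}
    (hf : IsHalfHalf h f j k) (h0 : f 0 = j) :
    f = twoValuedIndex j k {s | f s.succ = j} ∧ #{s : Fin m | f s.succ = j} + 1 = h := by
  obtain ⟨hjk, hcard, hval⟩ := hf
  constructor
  · funext t
    refine Fin.cases (by simp [twoValuedIndex, h0]) (fun s => ?_) t
    rcases hval s.succ with hs | hs <;> simp [twoValuedIndex, hs, hjk.symm]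
  · rwa [Fin.card_filter_univ_succ, if_pos h0] at hcard

def halfHalfParams [Fintype ι] [DecidableEq ι] (m h : ℕ) :
    Finset (ι ⊕ (ι × ι) × Finset (Fin m)) :=
  univ.disjSum (univ.offDiag ×ˢ powersetCard (h - 1) univ)

def halfHalfIndex : ι ⊕ (ι × ι) × Finset (Fin m) → Fin (m + 1) → ι :=
  Sum.elim (fun j _ => j) fun d => twoValuedIndex d.1.1 d.1.2 d.2

theorem mem_image_halfHalfIndex [Fintype ι] [DecidableEq ι] {h : ℕ} (hM : m + 1 = h + h)
    {f : Fin (m + 1) → ι} (hf : (∃ j, ∀ t, f t = j) ∨ ∃ j k, IsHalfHalf h f j k) :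
    f ∈ (halfHalfParams m h).image halfHalfIndex := by
  rw [mem_image]
  rcases hf with ⟨j, hj⟩ | ⟨j, k, hf⟩
  · exact ⟨.inl j, inl_mem_disjSum.2 (mem_univ j), (funext hj).symm⟩
  obtain ⟨j, k, hf, h0⟩ : ∃ j k, IsHalfHalf h f j k ∧ f 0 = j :=
    (hf.2.2 0).elim (fun h0 => ⟨j, k, hf, h0⟩) fun h0 => ⟨k, j, hf.symm hM, h0⟩
  obtain ⟨hfeq, hcard⟩ := hf.eq_twoValuedIndex h0
  replace hcard : #{s : Fin m | f s.succ = j} = h - 1 := by omega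
  refine ⟨.inr ((j, k), _), inr_mem_disjSum.2 ?_, hfeq.symm⟩
  exact mem_product.2 ⟨mem_offDiag.2 ⟨mem_univ _, mem_univ _, hf.1⟩,
    mem_powersetCard.2 ⟨subset_univ _, hcard⟩⟩

theorem apply_cons_const_eq_zero [DecidableEq ι] {R : Type*} [Zero R] {h : ℕ}
    (hM : m + 1 = h + h) (hh : 2 ≤ h) {T : (Fin (m + 1) → ι) → R}
    (hstruct : ∀ f, T f ≠ 0 → (∃ j, ∀ t, f t = j) ∨ ∃ j k, IsHalfHalf h f j k)
    {i : ι} (hij : i ≠ j) : T (Fin.cons i fun _ => j) = 0 := by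
  by_contra hne
  set f : Fin (m + 1) → ι := Fin.cons i fun _ => j
  have hcard : #{t | f t = i} = 1 := by
    rw [show f = twoValuedIndex i j ∅ by simp [f, twoValuedIndex], card_twoValuedIndex hij]
    rfl
  rcases hstruct f hne with ⟨l, hl⟩ | ⟨j', k', hf⟩
  · exact hij (by simpa [f] using (hl 0).trans (hl (Fin.succ ⟨0, by omega⟩)).symm)
  · obtain ⟨k, hk⟩ : ∃ k, IsHalfHalf h f i k := by
      rcases hf.2.2 0 with h0 | h0 <;> rw [show f 0 = i from Fin.cons_zero _ _] at h0 <;>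
        subst h0
      exacts [⟨k', hf⟩, ⟨j', hf.symm hM⟩]
    have := hk.2.1
    omega

end IndexCombinatorics

section Bound

variable {ι : Type*} [Fintype ι] [DecidableEq ι] {m h : ℕ}

theorem choose_pred_eq_choose (hM : m + 1 = h + h) : m.choose (h - 1) = m.choose h := by
  obtain ⟨h', rfl⟩ : ∃ h', h = h' + 1 := ⟨h - 1, by omega⟩
  obtain rfl : m = 2 * h' + 1 := by omega
  exact (Nat.choose_symm_half h').symm

theorem sum_abs_mul_prod_le_mul_sq_sum_pow (hM : m + 1 = h + h) {Ψ : (Fin (m + 1) → ι) → ℝ}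
    (hstruct : ∀ f, Ψ f ≠ 0 → (∃ j, ∀ t, f t = j) ∨ ∃ j k, IsHalfHalf h f j k)
    (hdom : ∀ (j k : ι) (f : Fin (m + 1) → ι), (∀ t, f t = j ∨ f t = k) →
      #{t | f t = j} = h → (m.choose h : ℝ) * |Ψ f| ≤ |Ψ fun _ => j|)
    {A : ℝ} (hA : ∀ j, |Ψ fun _ => j| ≤ A) {w : ι → ℝ} (hw : ∀ i, 0 ≤ w i) :
    ∑ f, |Ψ f| * ∏ t, w (f t) ≤ A * (∑ j, w j ^ h) ^ 2 := by
  have hC : (0 : ℝ) < m.choose h := by exact_mod_cast Nat.choose_pos (by omega)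
  have hwh (j : ι) : 0 ≤ w j ^ h := pow_nonneg (hw j) h
  have hsupp (f : Fin (m + 1) → ι) (hf : |Ψ f| * ∏ t, w (f t) ≠ 0) :
      f ∈ (halfHalfParams m h).image halfHalfIndex :=
    mem_image_halfHalfIndex hM (hstruct f (abs_ne_zero.1 (left_ne_zero_of_mul hf)))
  calc ∑ f, |Ψ f| * ∏ t, w (f t)
      ≤ ∑ b ∈ halfHalfParams m h, |Ψ (halfHalfIndex b)| * ∏ t, w (halfHalfIndex b t) :=
        sum_le_sum_comp_of_ne_zero_mem_image
          (fun f => mul_nonneg (abs_nonneg _) (prod_nonneg fun t _ => hw _)) hsupp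
    _ ≤ ∑ b ∈ halfHalfParams m h, Sum.elim (fun j => A * (w j ^ h * w j ^ h))
          (fun d => A / m.choose h * (w d.1.1 ^ h * w d.1.2 ^ h)) b := by
        refine sum_le_sum ?_
        rintro (j | ⟨⟨j, k⟩, T⟩) hb
        · have : ∏ t : Fin (m + 1), w j = w j ^ h * w j ^ h := by
            rw [prod_const, card_univ, Fintype.card_fin, hM, pow_add]
          simp only [halfHalfIndex, Sum.elim_inl, this]
          exact mul_le_mul_of_nonneg_right (hA j) (mul_nonneg (hwh j) (hwh j))
        · simp only [halfHalfParams, inr_mem_disjSum, mem_product, mem_offDiag,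
            mem_powersetCard] at hb
          obtain ⟨⟨-, -, hjk⟩, -, hT⟩ := hb
          have hΨ : |Ψ (twoValuedIndex j k T)| ≤ A / m.choose h := by
            rw [le_div_iff₀' hC]
            refine (hdom j k _ twoValuedIndex_eq_or_eq ?_).trans (hA j)
            rw [card_twoValuedIndex hjk]
            omega
          simp only [halfHalfIndex, Sum.elim_inr]
          rw [prod_twoValuedIndex, hT, show h - 1 + 1 = h by omega,
            show m - (h - 1) = h by omega]
          exact mul_le_mul_of_nonneg_right hΨ (mul_nonneg (hwh j) (hwh k))
    _ = A * (∑ j, w j ^ h) ^ 2 := by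
        simp only [halfHalfParams, sum_disjSum, Sum.elim_inl, Sum.elim_inr, sum_product,
          sum_const, card_powersetCard, card_univ, Fintype.card_fin, choose_pred_eq_choose hM,
          nsmul_eq_mul, sq_sum_eq_sum_mul_self_add_sum_offDiag, mul_add, mul_sum]
        field_simp

end Bound

section Eigen

variable {ι : Type} [Fintype ι] {m : ℕ}

theorem sum_cons_mul_prod_single [DecidableEq ι] {R : Type*} [CommSemiring R]
    (T : (Fin (m + 1) → ι) → R) (i j : ι) (c : R) :
    ∑ f : Fin m → ι, T (Fin.cons i f) * ∏ t, (Pi.single j c : ι → R) (f t) =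
      T (Fin.cons i fun _ => j) * c ^ m := by
  rw [sum_eq_single fun _ => j]
  · simp
  · intro f _ hf
    obtain ⟨t, ht⟩ : ∃ t, f t ≠ j := not_forall.1 fun h => hf (funext h)
    rw [prod_eq_zero (mem_univ t) (by simp [ht]), mul_zero]
  · exact (absurd (mem_univ _) ·)

theorem Fin.cons_self_const {α : Type*} (a : α) : (Fin.cons a fun _ => a : Fin (m + 1) → α) =
    fun _ => a :=
  funext fun t => Fin.cases rfl (fun _ => rfl) t

theorem isZEig_single [DecidableEq ι] {T : (Fin (m + 1) → ι) → ℝ} {j : ι}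
    (hoff : ∀ i ≠ j, T (Fin.cons i fun _ => j) = 0) :
    IsZEig T (T fun _ => j) (Pi.single j 1) := by
  refine ⟨funext fun i => ?_, ?_⟩
  rw [tapplyR, sum_cons_mul_prod_single, one_pow, mul_one]
  by_cases hi : i = j
  · subst hi; simp [Fin.cons_self_const]
  · simp [hoff i hi, hi]
  · rw [Fintype.sum_eq_single j fun i hi => by simp [hi]]
    simp

theorem isQEig_single [DecidableEq ι] {T : (Fin (m + 1) → ι) → ℝ} {j : ι}
    (hoff : ∀ i ≠ j, T (Fin.cons i fun _ => j) = 0) {c : ℂ} (hc : ‖c‖ = 1) {lam : ℝ}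
    (hlam : (T fun _ => j) * c ^ (m + 1) = lam) :
    IsQEig (toC T) lam (Pi.single j c) := by
  have hcc : c * starRingEnd ℂ c = 1 := by
    rw [Complex.mul_conj, Complex.normSq_eq_norm_sq, hc]; norm_num
  refine ⟨funext fun i => ?_, ?_⟩
  · rw [tapplyC, sum_cons_mul_prod_single]
    by_cases hi : i = j
    · subst hi
      simp only [toC, Fin.cons_self_const, Pi.single_eq_same, ← hlam]
      linear_combination (-(T fun _ => i) * c ^ m : ℂ) * hcc
    · simp [toC, hoff i hi, hi]
  · rw [Fintype.sum_eq_single j fun i hi => by simp [hi]]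
    simp [mul_comm, hcc]

theorem exists_norm_eq_one_mul_pow_eq_abs (a : ℝ) {M : ℕ} (hM : M ≠ 0) :
    ∃ c : ℂ, ‖c‖ = 1 ∧ a * c ^ M = |a| := by
  rcases le_or_gt 0 a with ha | ha
  · exact ⟨1, by simp, by simp [abs_of_nonneg ha]⟩
  obtain ⟨c, hc⟩ := IsAlgClosed.exists_pow_nat_eq (-1 : ℂ) (Nat.pos_of_ne_zero hM)
  refine ⟨c, (pow_eq_one_iff_of_nonneg (norm_nonneg c) hM).1 ?_, ?_⟩
  · rw [← norm_pow, hc, norm_neg, norm_one]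
  · rw [hc, abs_of_neg ha]; push_cast; ring

theorem isQEig_toC_of_isZEig {T : (Fin (m + 1) → ι) → ℝ} {lam : ℝ} {x : ι → ℝ}
    (hx : IsZEig T lam x) : IsQEig (toC T) lam fun i => (x i : ℂ) := by
  obtain ⟨heig, hnorm⟩ := hx
  refine ⟨funext fun i => ?_, ?_⟩
  · have := congrFun heig i
    simp only [tapplyR, tapplyC, toC, Complex.conj_ofReal] at this ⊢
    exact_mod_cast this
  · simp only [Complex.conj_ofReal, ← sq]
    exact_mod_cast hnorm

theorem sum_mul_tapplyC (T : (Fin (m + 1) → ι) → ℂ) (z : ι → ℂ) :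
    ∑ i, z i * tapplyC T z i = ∑ f, T f * ∏ t, z (f t) := by
  rw [← (Fin.consEquiv fun _ => ι).sum_comp, Fintype.sum_prod_type]
  simp [tapplyC, Fin.consEquiv, Fin.prod_univ_succ, mul_sum, mul_left_comm]

theorem abs_le_sum_abs_mul_prod_norm_of_isQEig {T : (Fin (m + 1) → ι) → ℝ} {lam : ℝ}
    {z : ι → ℂ} (hz : IsQEig (toC T) lam z) :
    |lam| ≤ ∑ f, |T f| * ∏ t, ‖z (f t)‖ := by
  obtain ⟨heig, hnorm⟩ := hz
  have hlam : (lam : ℂ) = ∑ f, toC T f * ∏ t, z (f t) :=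
    calc (lam : ℂ) = lam * ∑ i, starRingEnd ℂ (z i) * z i := by rw [hnorm, mul_one]
      _ = ∑ i, z i * (lam * starRingEnd ℂ (z i)) := by
        rw [mul_sum]; exact sum_congr rfl fun i _ => by ring
      _ = ∑ f, toC T f * ∏ t, z (f t) := by rw [← sum_mul_tapplyC, heig]
  calc |lam| = ‖∑ f, toC T f * ∏ t, z (f t)‖ := by
        rw [← hlam, Complex.norm_real, Real.norm_eq_abs]
    _ ≤ ∑ f, ‖toC T f * ∏ t, z (f t)‖ := norm_sum_le _ _
    _ = ∑ f, |T f| * ∏ t, ‖z (f t)‖ := by simp [toC, norm_prod]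

theorem sum_norm_sq_eq_one_of_isQEig {T : (Fin (m + 1) → ι) → ℂ} {lam : ℝ} {z : ι → ℂ}
    (hz : IsQEig T lam z) : ∑ i, ‖z i‖ ^ 2 = 1 := by
  have := hz.2
  simp only [mul_comm (starRingEnd ℂ _), Complex.mul_conj, Complex.normSq_eq_norm_sq] at this
  exact_mod_cast this

theorem sum_pow_le_one_of_sum_sq_eq_one {h : ℕ} (hh : 2 ≤ h) {w : ι → ℝ} (hw : ∀ i, 0 ≤ w i)
    (hw1 : ∑ i, w i ^ 2 = 1) : ∑ i, w i ^ h ≤ 1 := by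
  refine hw1 ▸ sum_le_sum fun i _ => pow_le_pow_of_le_one (hw i) ?_ hh
  rw [← sq_le_one_iff₀ (hw i), ← hw1]
  exact single_le_sum (fun j _ => sq_nonneg (w j)) (mem_univ i)

end Eigen

theorem half_half_diagonally_dominated_general {m n : ℕ} (hm : 4 ≤ m + 1)
    (heven : Even (m + 1)) (hn : 0 < n)
    (Ψ : (Fin (m + 1) → Fin n) → ℝ)
    (hstruct : ∀ f : Fin (m + 1) → Fin n, Ψ f ≠ 0 →
      (∃ j, ∀ t, f t = j) ∨
      ∃ j k : Fin n, j ≠ k ∧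
        (Finset.univ.filter fun t => f t = j).card = (m + 1) / 2 ∧
        ∀ t, f t = j ∨ f t = k)
    (hdom : ∀ (j k : Fin n) (f : Fin (m + 1) → Fin n),
      (∀ t, f t = j ∨ f t = k) →
      (Finset.univ.filter fun t => f t = j).card = (m + 1) / 2 →
      (Nat.choose m ((m + 1) / 2) : ℝ) * |Ψ f| ≤ |Ψ (fun _ => j)|) :
    QmaxR Ψ = Zrad Ψ ∧
      Zrad Ψ = Finset.univ.sup' ⟨⟨0, hn⟩, Finset.mem_univ _⟩
        (fun j => |Ψ (fun _ => j)|) := by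
  obtain ⟨h, hM⟩ := heven
  have hh : 2 ≤ h := by omega
  rw [show (m + 1) / 2 = h by omega] at hstruct hdom
  have hoff (j : Fin n) : ∀ i ≠ j, Ψ (Fin.cons i fun _ => j) = 0 := fun _ hij =>
    apply_cons_const_eq_zero hM hh hstruct hij
  set A := univ.sup' ⟨⟨0, hn⟩, mem_univ _⟩ fun j => |Ψ fun _ => j|
  have hA (j : Fin n) : |Ψ fun _ => j| ≤ A := le_sup' (fun j => |Ψ fun _ => j|) (mem_univ j)
  obtain ⟨j₀, -, hj₀⟩ : ∃ j ∈ univ, A = |Ψ fun _ => j| :=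
    exists_mem_eq_sup' ⟨⟨0, hn⟩, mem_univ _⟩ fun j => |Ψ fun _ => j|
  have hbound {lam : ℝ} {z : Fin n → ℂ} (hz : IsQEig (toC Ψ) lam z) : |lam| ≤ A :=
    calc |lam| ≤ ∑ f, |Ψ f| * ∏ t, ‖z (f t)‖ := abs_le_sum_abs_mul_prod_norm_of_isQEig hz
      _ ≤ A * (∑ j, ‖z j‖ ^ h) ^ 2 :=
        sum_abs_mul_prod_le_mul_sq_sum_pow hM hstruct hdom hA fun i => norm_nonneg _
      _ ≤ A := mul_le_of_le_one_right ((abs_nonneg _).trans (hA j₀))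
        (pow_le_one₀ (sum_nonneg fun i _ => by positivity) (sum_pow_le_one_of_sum_sq_eq_one hh
          (fun i => norm_nonneg _) (sum_norm_sq_eq_one_of_isQEig hz)))
  obtain ⟨c, hc, hcΨ⟩ := exists_norm_eq_one_mul_pow_eq_abs (Ψ fun _ => j₀) m.succ_ne_zero
  have hQ : IsGreatest {lam | ∃ z, IsQEig (toC Ψ) lam z} A :=
    ⟨⟨_, isQEig_single (hoff j₀) hc (by rw [hj₀]; exact_mod_cast hcΨ)⟩,
      fun lam ⟨_, hz⟩ => (le_abs_self lam).trans (hbound hz)⟩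
  have hZ : IsGreatest {r | ∃ lam x, IsZEig Ψ lam x ∧ r = |lam|} A :=
    ⟨⟨_, _, isZEig_single (hoff j₀), hj₀⟩,
      fun _ ⟨_, _, hx, hr⟩ => hr ▸ hbound (isQEig_toC_of_isZEig hx)⟩
  exact ⟨hQ.csSup_eq.trans hZ.csSup_eq.symm, hZ.csSup_eq⟩

/-- even order ≥ 4, half-half index structure and diagonal dominance
imply Q(Ψ) = Z(Ψ) = max_j |Ψ_{j⋯j}| (here the order is m + 1). -/
theorem half_half_diagonally_dominated {m n : ℕ} (hm : 4 ≤ m + 1)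
    (heven : Even (m + 1)) (hn : 0 < n)
    (Ψ : (Fin (m + 1) → Fin n) → ℝ) (hΨ : SymmT Ψ)
    (hstruct : ∀ f : Fin (m + 1) → Fin n, Ψ f ≠ 0 →
      (∃ j, ∀ t, f t = j) ∨
      ∃ j k : Fin n, j ≠ k ∧
        (Finset.univ.filter fun t => f t = j).card = (m + 1) / 2 ∧
        ∀ t, f t = j ∨ f t = k)
    (hdom : ∀ (j k : Fin n) (f : Fin (m + 1) → Fin n),
      (∀ t, f t = j ∨ f t = k) →
      (Finset.univ.filter fun t => f t = j).card = (m + 1) / 2 →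
      (Nat.choose m ((m + 1) / 2) : ℝ) * |Ψ f| ≤ |Ψ (fun _ => j)|) :
    QmaxR Ψ = Zrad Ψ ∧
      Zrad Ψ = Finset.univ.sup' ⟨⟨0, hn⟩, Finset.mem_univ _⟩
        (fun j => |Ψ (fun _ => j)|) :=
  half_half_diagonally_dominated_general hm heven hn Ψ hstruct hdom
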